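/- Let 0 < μ < L and suppose vectors x₀, x₁, x* ∈ ℝ^n, g₀, g₁ ∈ ℝ^n and reals f₀, f₁, f* satisfy the five inequalities: (1) f₀ ≥ f₁ + ⟨g₁, x₀ - x₁⟩ + (1/(2(1-μ/L)))((1/L)‖g₀-g₁‖² + μ‖x₀-x₁‖² - (2μ/L)⟨g₁-g₀, x₁-x₀⟩); (2) f* ≥ f₀ + ⟨g₀, x* - x₀⟩ + (1/(2(1-μ/L)))((1/L)‖g₀‖² + μ‖x*-x₀‖² - (2μ/L)⟨g₀, x₀-x*⟩); (3) f* ≥ f₁ + ⟨g₁, x* - x₁⟩ + (1/(2(1-μ/L)))((1/L)‖g₁‖² + μ‖x*-x₁‖² - (2μ/L)⟨g₁, x₁-x*⟩); (4) -g₀ᵀg₁ ≥ 0; (5) g₁ᵀ(x₀ - x₁) ≥ 0. Then f₁ - f* ≤ ((L-μ)/(L+μ))²(f₀ - f*). -/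

import Mathlib

/-!
Clear the denominator `2 (1 - μ/L)` in each interpolation inequality to obtain a polynomial
slack that is nonnegative. Multiplying the three slacks and the two line-search conditions
`-⟪g₀, g₁⟫ ≥ 0`, `⟪g₁, x₀ - x₁⟫ ≥ 0` by nonnegative multipliers and adding two weighted squared
norms gives exactly `2 (L + 3μ)(L - μ) ((L - μ)² (f₀ - f*) - (L + μ)² (f₁ - f*))`, which is
therefore nonnegative. The multipliers are a dual certificate of the performance estimation
problem for one step of the method.
-/

open RealInnerProductSpace

/-- The `F_{μ,L}` interpolation inequality between the triples `(xi, fi, gi)` and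
`(xj, fj, gj)`. -/
def InterpIneq {n : ℕ} (μ L : ℝ) (xi xj : EuclideanSpace ℝ (Fin n)) (fi fj : ℝ)
    (gi gj : EuclideanSpace ℝ (Fin n)) : Prop :=
  fi ≥ fj + ⟪gj, xi - xj⟫ + 1 / (2 * (1 - μ / L)) *
    ((1 / L) * ‖gi - gj‖ ^ 2 + μ * ‖xi - xj‖ ^ 2 - (2 * μ / L) * ⟪gj - gi, xj - xi⟫)

def interpSlack {E : Type*} [NormedAddCommGroup E] [InnerProductSpace ℝ E] (μ L : ℝ)
    (xi xj : E) (fi fj : ℝ) (gi gj : E) : ℝ :=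
  2 * (L - μ) * (fi - fj - ⟪gj, xi - xj⟫) - ‖gi - gj‖ ^ 2 - μ * L * ‖xi - xj‖ ^ 2
    + 2 * μ * ⟪gj - gi, xj - xi⟫

theorem InterpIneq.interpSlack_nonneg {n : ℕ} {μ L : ℝ} (hL : L ≠ 0) (hμL : μ < L)
    {xi xj gi gj : EuclideanSpace ℝ (Fin n)} {fi fj : ℝ}
    (h : InterpIneq μ L xi xj fi fj gi gj) : 0 ≤ interpSlack μ L xi xj fi fj gi gj := by
  have hLμ : L - μ ≠ 0 := (sub_pos.mpr hμL).ne'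
  have hden : 1 - μ / L ≠ 0 := by rwa [one_sub_div hL, div_ne_zero_iff, and_iff_left hL]
  have hslack : interpSlack μ L xi xj fi fj gi gj = 2 * (L - μ) * (fi - (fj + ⟪gj, xi - xj⟫ +
      1 / (2 * (1 - μ / L)) * ((1 / L) * ‖gi - gj‖ ^ 2 + μ * ‖xi - xj‖ ^ 2
        - (2 * μ / L) * ⟪gj - gi, xj - xi⟫))) := by
    unfold interpSlack
    field_simp
    ring
  rw [hslack]
  exact mul_nonneg (by linarith) (sub_nonneg.mpr h)

section Certificate

variable {E : Type*} [NormedAddCommGroup E] [InnerProductSpace ℝ E]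

theorem interpSlack_certificate (μ L : ℝ) (x₀ x₁ xs g₀ g₁ : E) (f₀ f₁ fs : ℝ) :
    2 * (L + 3 * μ) * (L - μ) * ((L - μ) ^ 2 * (f₀ - fs) - (L + μ) ^ 2 * (f₁ - fs))
      = (L + 3 * μ) * (L - μ) * (L + μ) * interpSlack μ L x₀ x₁ f₀ f₁ g₀ g₁
        + 2 * μ * (L + 3 * μ) * (L - μ) * interpSlack μ L xs x₀ fs f₀ 0 g₀
        + 2 * μ * (L + 3 * μ) * (L + μ) * interpSlack μ L xs x₁ fs f₁ 0 g₁
        + 4 * (L + 3 * μ) * (L - μ) * (L + μ) * -⟪g₀, g₁⟫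
        + 2 * (L + 3 * μ) * (L - μ) * (L + μ) ^ 2 * ⟪g₁, x₀ - x₁⟫
        + (L - μ) * ‖(L + 3 * μ) • g₀ + (L + μ) • g₁ - (μ * (3 * L + μ)) • (x₀ - xs)
            + (μ * (L + μ)) • (x₁ - xs)‖ ^ 2
        + μ * ‖(2 * (L + μ)) • g₁ + ((L - μ) ^ 2) • (x₀ - xs) - ((L + μ) ^ 2) • (x₁ - xs)‖ ^ 2 := by
  simp only [interpSlack, ← real_inner_self_eq_norm_sq, inner_sub_left, inner_sub_right,
    inner_add_left, inner_add_right, real_inner_smul_right, inner_zero_left,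
    inner_zero_right, real_inner_comm]
  ring

theorem sq_mul_le_sq_mul_of_interpSlack_nonneg {μ L : ℝ} (hμ : 0 < μ) (hμL : μ < L)
    {x₀ x₁ xs g₀ g₁ : E} {f₀ f₁ fs : ℝ}
    (h1 : 0 ≤ interpSlack μ L x₀ x₁ f₀ f₁ g₀ g₁)
    (h2 : 0 ≤ interpSlack μ L xs x₀ fs f₀ 0 g₀)
    (h3 : 0 ≤ interpSlack μ L xs x₁ fs f₁ 0 g₁)
    (h4 : -⟪g₀, g₁⟫ ≥ 0) (h5 : ⟪g₁, x₀ - x₁⟫ ≥ 0) :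
    (L + μ) ^ 2 * (f₁ - fs) ≤ (L - μ) ^ 2 * (f₀ - fs) := by
  have hLμ : 0 < L - μ := sub_pos.mpr hμL
  have hL3μ : 0 < L + 3 * μ := by linarith
  have hLpμ : 0 < L + μ := by linarith
  have hsum : 0 ≤ 2 * (L + 3 * μ) * (L - μ) *
      ((L - μ) ^ 2 * (f₀ - fs) - (L + μ) ^ 2 * (f₁ - fs)) := by
    rw [interpSlack_certificate μ L x₀ x₁ xs g₀ g₁ f₀ f₁ fs]
    refine add_nonneg (add_nonneg (add_nonneg (add_nonneg (add_nonneg (add_nonneg ?_ ?_) ?_) ?_)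
      ?_) ?_) ?_ <;> positivity
  have hpos : 0 < 2 * (L + 3 * μ) * (L - μ) := by positivity
  linarith [nonneg_of_mul_nonneg_right hsum hpos]

end Certificate

theorem stmt5 {n : ℕ} (μ L : ℝ) (hμ : 0 < μ) (hμL : μ < L)
    (x₀ x₁ xstar g₀ g₁ : EuclideanSpace ℝ (Fin n)) (f₀ f₁ fstar : ℝ)
    (h1 : InterpIneq μ L x₀ x₁ f₀ f₁ g₀ g₁)
    (h2 : InterpIneq μ L xstar x₀ fstar f₀ 0 g₀)
    (h3 : InterpIneq μ L xstar x₁ fstar f₁ 0 g₁)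
    (h4 : -⟪g₀, g₁⟫ ≥ 0)
    (h5 : ⟪g₁, x₀ - x₁⟫ ≥ 0) :
    f₁ - fstar ≤ ((L - μ) / (L + μ)) ^ 2 * (f₀ - fstar) := by
  have hL : L ≠ 0 := (hμ.trans hμL).ne'
  have hrate := sq_mul_le_sq_mul_of_interpSlack_nonneg hμ hμL
    (h1.interpSlack_nonneg hL hμL) (h2.interpSlack_nonneg hL hμL)
    (h3.interpSlack_nonneg hL hμL) h4 h5
  rw [div_pow, div_mul_eq_mul_div, le_div_iff₀ (pow_pos (by linarith) 2)]
  linarith
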